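/- arXiv:1707.07094 — 2 statements merged into one kernel-verified Lean document; each statement's English description precedes it below -/
import Mathlib

section
/- Let f be c-strongly convex and differentiable. If ∇f(v₁) + Bᵀλ₁ = 0 and ∇f(v₂) + Bᵀλ₂ = 0, then c‖v₁ − v₂‖² ≤ ⟨B(v₁ − v₂), λ₂ − λ₁⟩; in particular ‖v₁ − v₂‖ ≤ (σ_max(B)/c)‖λ₁ − λ₂‖. -/
/-!
Subtracting the two stationarity conditions gives `∇f(v₁) - ∇f(v₂) = Bᵀ(λ₂ - λ₁)`; pairing with
`v₁ - v₂` and moving `Bᵀ` across the inner product turns strong monotonicity of `∇f` into the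
first inequality. Cauchy–Schwarz bounds its right-hand side by `σ_max(B) ‖v₁ - v₂‖ ‖λ₁ - λ₂‖`,
and dividing by `c ‖v₁ - v₂‖` gives the second.
-/

open RealInnerProductSpace

section StronglyMonotone

variable {E F : Type*} [NormedAddCommGroup E] [InnerProductSpace ℝ E]
  [NormedAddCommGroup F] [InnerProductSpace ℝ F]

theorem mul_sq_norm_sub_le_inner_of_add_adjoint_eq_zero [FiniteDimensional ℝ E]
    [FiniteDimensional ℝ F] {G : E → E} {c : ℝ}
    (hG : ∀ x y, c * ‖x - y‖ ^ 2 ≤ ⟪x - y, G x - G y⟫) (A : E →ₗ[ℝ] F) {v₁ v₂ : E} {l₁ l₂ : F}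
    (h₁ : G v₁ + LinearMap.adjoint A l₁ = 0) (h₂ : G v₂ + LinearMap.adjoint A l₂ = 0) :
    c * ‖v₁ - v₂‖ ^ 2 ≤ ⟪A (v₁ - v₂), l₂ - l₁⟫ := by
  have hdiff : G v₁ - G v₂ = LinearMap.adjoint A (l₂ - l₁) := by
    rw [map_sub, eq_neg_of_add_eq_zero_left h₁, eq_neg_of_add_eq_zero_left h₂]
    abel
  calc c * ‖v₁ - v₂‖ ^ 2 ≤ ⟪v₁ - v₂, G v₁ - G v₂⟫ := hG v₁ v₂
    _ = ⟪A (v₁ - v₂), l₂ - l₁⟫ := by rw [hdiff, LinearMap.adjoint_inner_right]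

theorem norm_le_opNorm_div_mul_of_mul_sq_norm_le_inner {c : ℝ} (hc : 0 < c) (A : E →L[ℝ] F)
    {x : E} {l : F} (h : c * ‖x‖ ^ 2 ≤ ⟪A x, l⟫) :
    ‖x‖ ≤ ‖A‖ / c * ‖l‖ := by
  rcases (norm_nonneg x).eq_or_lt with hx | hx
  · rw [← hx]
    positivity
  have hbound : c * ‖x‖ * ‖x‖ ≤ ‖A‖ * ‖l‖ * ‖x‖ :=
    calc c * ‖x‖ * ‖x‖ = c * ‖x‖ ^ 2 := by ring
      _ ≤ ⟪A x, l⟫ := h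
      _ ≤ ‖A x‖ * ‖l‖ := real_inner_le_norm _ _
      _ ≤ ‖A‖ * ‖x‖ * ‖l‖ := by gcongr; exact A.le_opNorm x
      _ = ‖A‖ * ‖l‖ * ‖x‖ := by ring
  rw [div_mul_eq_mul_div, le_div_iff₀ hc, mul_comm]
  exact le_of_mul_le_mul_right hbound hx

end StronglyMonotone

theorem Matrix.toEuclideanLin_transpose_eq_adjoint {m n : Type*} [Fintype m] [Fintype n]
    [DecidableEq m] [DecidableEq n] (B : Matrix m n ℝ) :
    Matrix.toEuclideanLin B.transpose = LinearMap.adjoint (Matrix.toEuclideanLin B) := by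
  rw [← Matrix.conjTranspose_eq_transpose_of_trivial, Matrix.toEuclideanLin_conjTranspose_eq_adjoint]

theorem stmt13_general {n : ℕ}
    (Gf : EuclideanSpace ℝ (Fin n) → EuclideanSpace ℝ (Fin n))
    (c : ℝ) (hc : 0 < c)
    (hsc : ∀ x y, c * ‖x - y‖ ^ 2 ≤ ⟪x - y, Gf x - Gf y⟫)
    (B : Matrix (Fin n) (Fin n) ℝ)
    (v₁ v₂ l₁ l₂ : EuclideanSpace ℝ (Fin n))
    (h1 : Gf v₁ + Matrix.toEuclideanLin B.transpose l₁ = 0)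
    (h2 : Gf v₂ + Matrix.toEuclideanLin B.transpose l₂ = 0) :
    c * ‖v₁ - v₂‖ ^ 2 ≤ ⟪Matrix.toEuclideanLin B (v₁ - v₂), l₂ - l₁⟫ ∧
    ‖v₁ - v₂‖ ≤ (‖Matrix.toEuclideanCLM (𝕜 := ℝ) B‖ / c) * ‖l₁ - l₂‖ := by
  rw [Matrix.toEuclideanLin_transpose_eq_adjoint] at h1 h2
  have key := mul_sq_norm_sub_le_inner_of_add_adjoint_eq_zero hsc _ h1 h2
  refine ⟨key, ?_⟩
  rw [norm_sub_rev l₁ l₂]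
  exact norm_le_opNorm_div_mul_of_mul_sq_norm_le_inner hc _ key

/-- If `f` is `c`-strongly convex with gradient `∇f` and `∇f(v₁) + Bᵀλ₁ = 0`,
`∇f(v₂) + Bᵀλ₂ = 0`, then `c‖v₁-v₂‖² ≤ ⟪B(v₁-v₂), λ₂-λ₁⟫`; in particular
`‖v₁-v₂‖ ≤ (σ_max(B)/c)‖λ₁-λ₂‖` with `σ_max(B)` the operator norm of `B`. -/
theorem stmt13 {n : ℕ} (f : EuclideanSpace ℝ (Fin n) → ℝ)
    (Gf : EuclideanSpace ℝ (Fin n) → EuclideanSpace ℝ (Fin n))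
    (hf : ∀ x, HasGradientAt f (Gf x) x)
    (c : ℝ) (hc : 0 < c)
    (hsc : ∀ x y, c * ‖x - y‖ ^ 2 ≤ ⟪x - y, Gf x - Gf y⟫)
    (B : Matrix (Fin n) (Fin n) ℝ)
    (v₁ v₂ l₁ l₂ : EuclideanSpace ℝ (Fin n))
    (h1 : Gf v₁ + Matrix.toEuclideanLin B.transpose l₁ = 0)
    (h2 : Gf v₂ + Matrix.toEuclideanLin B.transpose l₂ = 0) :
    c * ‖v₁ - v₂‖ ^ 2 ≤ ⟪Matrix.toEuclideanLin B (v₁ - v₂), l₂ - l₁⟫ ∧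
    ‖v₁ - v₂‖ ≤ (‖Matrix.toEuclideanCLM (𝕜 := ℝ) B‖ / c) * ‖l₁ - l₂‖ :=
  stmt13_general Gf c hc hsc B v₁ v₂ l₁ l₂ h1 h2
end

section
/- Let B be a symmetric positive definite matrix and define the linear dynamical map T(q, λ) = (P_Q(q − α(γ(B⁻¹(q+w) − μ) − λ)), λ + β(B(μ − Bλ) − P_Q(q − α(γ(B⁻¹(q+w)−μ) − λ)) − w)) encoding one PPD iteration with v-substitution v = μ − Bλ. A fixed point (q*, λ*) of T satisfies the KKT conditions of the constrained problem: ∇f₁(v*) + Bλ* = 0 with v* = μ − Bλ*, λ* − γ(B⁻¹(q*+w) − μ) ∈ N_Q(q*), and Bv* = q* + w. -/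
open RealInnerProductSpace

section

variable {F : Type*} [NormedAddCommGroup F] [InnerProductSpace ℝ F] {K : Set F}

theorem real_inner_sub_sub_nonpos_of_forall_norm_sub_le (hK : Convex ℝ K) {u v : F}
    (hv : v ∈ K) (hmin : ∀ w ∈ K, ‖u - v‖ ≤ ‖u - w‖) : ∀ w ∈ K, ⟪u - v, w - v⟫ ≤ 0 := by
  have : Nonempty K := ⟨⟨v, hv⟩⟩
  refine (norm_eq_iInf_iff_real_inner_le_zero hK hv).mp (le_antisymm ?_ ?_)
  · exact le_ciInf fun w => hmin w w.2
  · exact ciInf_le ⟨0, Set.forall_mem_range.2 fun _ => norm_nonneg _⟩ (⟨v, hv⟩ : K)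

theorem real_inner_neg_sub_nonpos_of_eq_proj_sub_smul (hK : Convex ℝ K) {P : F → F}
    (hP : ∀ z, P z ∈ K ∧ ∀ y ∈ K, ‖z - P z‖ ≤ ‖z - y‖) {α : ℝ} (hα : 0 < α) {q g : F}
    (hfix : q = P (q - α • g)) : ∀ y ∈ K, ⟪-g, y - q⟫ ≤ 0 := by
  have hq : q ∈ K := hfix ▸ (hP _).1
  have hmin := (hP (q - α • g)).2
  rw [← hfix] at hmin
  intro y hy
  have h := real_inner_sub_sub_nonpos_of_forall_norm_sub_le hK hq hmin y hy
  rw [sub_sub_cancel_left, ← smul_neg, real_inner_smul_left] at h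
  exact nonpos_of_mul_nonpos_right h hα

end

theorem stmt18_general {n : ℕ} (B : Matrix (Fin n) (Fin n) ℝ)
    (Q : Set (EuclideanSpace ℝ (Fin n)))
    (hQconv : Convex ℝ Q)
    (P : EuclideanSpace ℝ (Fin n) → EuclideanSpace ℝ (Fin n))
    (hP : ∀ z, P z ∈ Q ∧ ∀ y ∈ Q, ‖z - P z‖ ≤ ‖z - y‖)
    (α β γ : ℝ) (hα : 0 < α) (hβ : 0 < β)
    (μ w qs ls : EuclideanSpace ℝ (Fin n))
    (hfixq : qs = P (qs - α • (γ • (Matrix.toEuclideanLin B⁻¹ (qs + w) - μ) - ls)))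
    (hfixl : ls = ls + β • (Matrix.toEuclideanLin B (μ - Matrix.toEuclideanLin B ls)
      - qs - w)) :
    ((μ - Matrix.toEuclideanLin B ls) - μ) + Matrix.toEuclideanLin B ls = 0 ∧
    (∀ y ∈ Q, ⟪ls - γ • (Matrix.toEuclideanLin B⁻¹ (qs + w) - μ), y - qs⟫ ≤ 0) ∧
    Matrix.toEuclideanLin B (μ - Matrix.toEuclideanLin B ls) = qs + w := by
  refine ⟨by abel, ?_, ?_⟩
  · have hnormal := real_inner_neg_sub_nonpos_of_eq_proj_sub_smul hQconv hP hα hfixq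
    simpa only [neg_sub] using hnormal
  · have hresidual := (smul_eq_zero.mp (left_eq_add.mp hfixl)).resolve_left hβ.ne'
    rwa [sub_sub, sub_eq_zero] at hresidual

/-- A fixed point `(q*, λ*)` of one PPD iteration (with the substitution `v = μ - Bλ`)
satisfies the KKT conditions: `∇f₁(v*) + Bλ* = 0` with `v* = μ - Bλ*`,
`λ* - γ(B⁻¹(q*+w) - μ) ∈ N_Q(q*)`, and `Bv* = q* + w`. -/
theorem stmt18 {n : ℕ} (B : Matrix (Fin n) (Fin n) ℝ) (hB : B.PosDef)
    (Q : Set (EuclideanSpace ℝ (Fin n)))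
    (hQne : Q.Nonempty) (hQcl : IsClosed Q) (hQconv : Convex ℝ Q)
    (P : EuclideanSpace ℝ (Fin n) → EuclideanSpace ℝ (Fin n))
    (hP : ∀ z, P z ∈ Q ∧ ∀ y ∈ Q, ‖z - P z‖ ≤ ‖z - y‖)
    (α β γ : ℝ) (hα : 0 < α) (hβ : 0 < β) (hγ : 0 < γ)
    (μ w qs ls : EuclideanSpace ℝ (Fin n))
    (hfixq : qs = P (qs - α • (γ • (Matrix.toEuclideanLin B⁻¹ (qs + w) - μ) - ls)))
    (hfixl : ls = ls + β • (Matrix.toEuclideanLin B (μ - Matrix.toEuclideanLin B ls)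
      - qs - w)) :
    ((μ - Matrix.toEuclideanLin B ls) - μ) + Matrix.toEuclideanLin B ls = 0 ∧
    (∀ y ∈ Q, ⟪ls - γ • (Matrix.toEuclideanLin B⁻¹ (qs + w) - μ), y - qs⟫ ≤ 0) ∧
    Matrix.toEuclideanLin B (μ - Matrix.toEuclideanLin B ls) = qs + w :=
  stmt18_general B Q hQconv P hP α β γ hα hβ μ w qs ls hfixq hfixl
end
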